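/- Let P ∈ B(H) be a bounded idempotent. Then P_{(2I−P−P*)^−} + P_{N(2I−P−P*)} = P_{(P+P*)^+}; that is, the orthogonal projection onto the closure of the range of the negative part of 2I − P − P*, plus the orthogonal projection onto the kernel of 2I − P − P*, equals the orthogonal projection onto the closure of the range of the positive part of P + P*. -/

import Mathlib

open ContinuousLinearMap

variable {H : Type*} [NormedAddCommGroup H] [InnerProductSpace ℂ H] [CompleteSpace H]

/-- The orthogonal projection onto a closed subspace `M`, as an operator on `H`. -/
noncomputable def oproj (M : Submodule ℂ H) (hM : IsClosed (M : Set H)) : H →L[ℂ] H :=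
  haveI : CompleteSpace M := hM.completeSpace_coe
  M.subtypeL ∘L M.orthogonalProjectionOnto

/-- The orthogonal projection onto the closure of the range of an operator. -/
noncomputable def rangeProj (A : H →L[ℂ] H) : H →L[ℂ] H :=
  oproj (LinearMap.range (A : H →ₗ[ℂ] H)).topologicalClosure (Submodule.isClosed_topologicalClosure _)

/-- The orthogonal projection onto the kernel of an operator. -/
noncomputable def kerProj (A : H →L[ℂ] H) : H →L[ℂ] H :=
  oproj (LinearMap.ker (A : H →ₗ[ℂ] H)) (ContinuousLinearMap.isClosed_ker A)

/-- The absolute value `|A| = (A*A)^{1/2}` of an operator. -/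
noncomputable def absOp (A : H →L[ℂ] H) : H →L[ℂ] H := CFC.sqrt (adjoint A * A)

/-- The positive part `A⁺ = (|A| + A)/2` of a self-adjoint operator. -/
noncomputable def posPartOp (A : H →L[ℂ] H) : H →L[ℂ] H := (2 : ℂ)⁻¹ • (absOp A + A)

/-- The negative part `A⁻ = (|A| − A)/2` of a self-adjoint operator. -/
noncomputable def negPartOp (A : H →L[ℂ] H) : H →L[ℂ] H := (2 : ℂ)⁻¹ • (absOp A - A)

/-! With `A = P + P*`, idempotency gives `A * A - 2 * A = (P* - P)* (P* - P) ≥ 0`, so the spectrum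
of `A` misses `(0, 2)`. The closures of the ranges of the self-adjoint operators `A⁺` and
`(2 - A)⁻` are the orthogonal complements of their kernels, and for closed subspaces `N ≤ M` one
has `P_{Mᗮ} + P_N = P_{(M ⊓ Nᗮ)ᗮ}`; so it suffices that `ker (2 - A) ≤ ker (2 - A)⁻` and
`ker A⁺ = ker (2 - A)⁻ ⊓ (ker (2 - A))ᗮ`. Inclusions between kernels of functions of `A` come
from factorisations `f = h * g` on the spectrum; only `ker (2 - A)⁻ ⊓ (ker (2 - A))ᗮ ≤ ker A⁺`
uses the spectral gap. -/

namespace Submodule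

variable {𝕜 E : Type*} [RCLike 𝕜] [NormedAddCommGroup E] [InnerProductSpace 𝕜 E]

theorem starProjection_eq_sub_of_eq_inf_orthogonal {K M N : Submodule 𝕜 E}
    [K.HasOrthogonalProjection] [M.HasOrthogonalProjection] [N.HasOrthogonalProjection]
    (hNM : N ≤ M) (hK : K = M ⊓ Nᗮ) :
    K.starProjection = M.starProjection - N.starProjection := by
  ext x
  have hNMx : N.starProjection (M.starProjection x) = N.starProjection x :=
    congr($(starProjection_comp_starProjection_of_le hNM) x)
  refine eq_starProjection_of_mem_orthogonal (K := K) ?_ ?_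
  · rw [hK]
    refine ⟨sub_mem (M.starProjection_apply_mem x) (hNM (N.starProjection_apply_mem x)), ?_⟩
    simpa [hNMx] using N.sub_starProjection_mem_orthogonal (M.starProjection x)
  · have hMK : Mᗮ ≤ Kᗮ := orthogonal_le (hK ▸ inf_le_left)
    have hNK : N ≤ Kᗮ := N.le_orthogonal_orthogonal.trans (orthogonal_le (hK ▸ inf_le_right))
    rw [sub_apply, sub_sub_eq_add_sub, add_sub_right_comm]
    exact add_mem (hMK (M.sub_starProjection_mem_orthogonal x))
      (hNK (N.starProjection_apply_mem x))

end Submodule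

theorem IsSelfAdjoint.apply_eq_zero_of_apply_apply_mem {𝕜 E : Type*} [RCLike 𝕜]
    [NormedAddCommGroup E] [InnerProductSpace 𝕜 E] [CompleteSpace E] {T : E →L[𝕜] E}
    (hT : IsSelfAdjoint T) {N : Submodule 𝕜 E} {x : E} (hx : x ∈ Nᗮ) (hTTx : T (T x) ∈ N) :
    T x = 0 := by
  rw [← inner_self_eq_zero (𝕜 := 𝕜)]
  exact (hT.isSymmetric x (T x)).trans ((N.mem_orthogonal' x).1 hx _ hTTx)

theorem oproj_eq_starProjection {M N : Submodule ℂ H} (hM : IsClosed (M : Set H))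
    [N.HasOrthogonalProjection] (h : M = N) : oproj M hM = N.starProjection := by
  subst h; rfl

theorem rangeProj_eq_starProjection_orthogonal_ker {T : H →L[ℂ] H} (hT : IsSelfAdjoint T) :
    rangeProj T = (LinearMap.ker (T : H →ₗ[ℂ] H))ᗮ.starProjection := by
  refine oproj_eq_starProjection _ ?_
  have h := T.orthogonal_ker
  rw [hT.adjoint_eq] at h
  exact h.symm

theorem kerProj_eq_starProjection (T : H →L[ℂ] H) :
    kerProj T = (LinearMap.ker (T : H →ₗ[ℂ] H)).starProjection := rfl

theorem posPartOp_eq_posPart {T : H →L[ℂ] H} (hT : IsSelfAdjoint T) : posPartOp T = T⁺ := by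
  change (2 : ℂ)⁻¹ • (CFC.abs T + T) = T⁺
  rw [CFC.abs_add_self T hT, two_smul, ← two_smul ℂ, smul_smul, inv_mul_cancel₀ two_ne_zero,
    one_smul]

theorem negPartOp_eq_negPart {T : H →L[ℂ] H} (hT : IsSelfAdjoint T) : negPartOp T = T⁻ := by
  change (2 : ℂ)⁻¹ • (CFC.abs T - T) = T⁻
  rw [CFC.abs_sub_self T hT, two_smul, ← two_smul ℂ, smul_smul, inv_mul_cancel₀ two_ne_zero,
    one_smul]

theorem ker_le_ker_negPart {T : H →L[ℂ] H} (hT : IsSelfAdjoint T) :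
    LinearMap.ker (T : H →ₗ[ℂ] H) ≤ LinearMap.ker (↑T⁻ : H →ₗ[ℂ] H) := by
  intro x (hx : T x = 0)
  have hsq : T⁻ * T⁻ = -(T⁻ * T) := by
    calc T⁻ * T⁻ = -(T⁻ * (T⁺ - T⁻)) := by
          rw [mul_sub, CFC.negPart_mul_posPart, zero_sub, neg_neg]
      _ = -(T⁻ * T) := by rw [CFC.posPart_sub_negPart T hT]
  refine (CFC.negPart_nonneg T).isSelfAdjoint.apply_eq_zero_of_apply_apply_mem (N := ⊥)
    (by simp) ?_
  simp [← mul_apply_eq_comp, hsq, hx]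

theorem ker_cfc_le_ker_cfc {a : H →L[ℂ] H} {f g h : ℝ → ℝ}
    (hfgh : ∀ t ∈ spectrum ℝ a, f t = h t * g t)
    (hh : ContinuousOn h (spectrum ℝ a) := by cfc_cont_tac)
    (hg : ContinuousOn g (spectrum ℝ a) := by cfc_cont_tac) :
    LinearMap.ker (↑(cfc g a) : H →ₗ[ℂ] H) ≤
      LinearMap.ker (↑(cfc f a) : H →ₗ[ℂ] H) := by
  intro x (hx : cfc g a x = 0)
  change cfc f a x = 0
  rw [cfc_congr hfgh, cfc_mul h g a, mul_apply_eq_comp, hx, map_zero]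

theorem le_zero_or_two_le_of_mem_spectrum_add_star {A : Type*} [CStarAlgebra A] [PartialOrder A]
    [StarOrderedRing A] {p : A} (hp : IsIdempotentElem p) {t : ℝ}
    (ht : t ∈ spectrum ℝ (p + star p)) : t ≤ 0 ∨ 2 ≤ t := by
  have hsq :
      (p + star p) * (p + star p) - 2 * (p + star p) = star (star p - p) * (star p - p) := by
    have hp' : star p * star p = star p := hp.star
    simp only [star_sub, star_star, mul_add, add_mul, mul_sub, sub_mul, hp.eq, hp', two_mul]
    abel
  have hmem := spectrum.subset_polynomial_aeval (p + star p) (.X * .X - 2 * .X) ⟨t, ht, rfl⟩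
  simp only [map_sub, map_mul, Polynomial.aeval_X, map_ofNat, Polynomial.eval_sub,
    Polynomial.eval_mul, Polynomial.eval_X, Polynomial.eval_ofNat, hsq] at hmem
  have := spectrum_nonneg_of_nonneg (star_mul_self_nonneg _) hmem
  rcases le_or_gt t 0 with h | h
  · exact Or.inl h
  · exact Or.inr (by nlinarith)

attribute [local fun_prop] continuous_posPart continuous_negPart

section SpectralGap

variable {A : H →L[ℂ] H}

theorem posPart_eq_cfc : A⁺ = cfc (·⁺ : ℝ → ℝ) A := by
  rw [CFC.posPart_def, cfcₙ_eq_cfc]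

theorem two_sub_eq_cfc (hA : IsSelfAdjoint A) : 2 - A = cfc (fun t : ℝ => 2 - t) A := by
  rw [cfc_sub (fun _ : ℝ => 2) (fun t : ℝ => t) A, cfc_const 2 A, cfc_id' ℝ A, map_ofNat]

theorem negPart_two_sub_eq_cfc (hA : IsSelfAdjoint A) :
    (2 - A)⁻ = cfc (fun t : ℝ => (2 - t)⁻) A := by
  rw [CFC.negPart_def, cfcₙ_eq_cfc, two_sub_eq_cfc hA,
    ← cfc_comp' (·⁻) (fun t : ℝ => 2 - t) A]

theorem ker_posPart_le_ker_negPart_two_sub (hA : IsSelfAdjoint A) :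
    LinearMap.ker (↑A⁺ : H →ₗ[ℂ] H) ≤
      LinearMap.ker (↑(2 - A)⁻ : H →ₗ[ℂ] H) := by
  rw [posPart_eq_cfc, negPart_two_sub_eq_cfc hA]
  have hh : Continuous fun t : ℝ => (2 - t)⁻ / max t 1 :=
    Continuous.div (by fun_prop) (by fun_prop) fun t => (one_pos.trans_le (le_max_right t 1)).ne'
  refine ker_cfc_le_ker_cfc (fun t _ => ?_) hh.continuousOn
  rcases le_total t 2 with h | h
  · simp [negPart_eq_zero.2 (sub_nonneg.2 h)]
  · rw [posPart_eq_self.2 (by linarith), max_eq_left (by linarith)]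
    field_simp [(by linarith : t ≠ 0)]

theorem ker_posPart_le_orthogonal_ker_two_sub (hA : IsSelfAdjoint A) :
    LinearMap.ker (↑A⁺ : H →ₗ[ℂ] H) ≤
      (LinearMap.ker (↑(2 - A) : H →ₗ[ℂ] H))ᗮ := by
  have hfix : LinearMap.ker (↑(2 - A) : H →ₗ[ℂ] H) ≤
      LinearMap.ker (↑(A⁺ - 2) : H →ₗ[ℂ] H) := by
    have hcfc : A⁺ - 2 = cfc (fun t : ℝ => t⁺ - 2) A := by
      rw [cfc_sub (·⁺ : ℝ → ℝ) (fun _ : ℝ => 2) A, cfc_const 2 A, map_ofNat,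
        posPart_eq_cfc]
    rw [hcfc, two_sub_eq_cfc hA]
    have hh : Continuous fun t : ℝ => -2 / (2 - min t 0) :=
      continuous_const.div (by fun_prop) fun t => by linarith [min_le_right t 0]
    refine ker_cfc_le_ker_cfc (fun t _ => ?_) hh.continuousOn
    rcases le_total t 0 with h | h
    · rw [posPart_eq_zero.2 h, min_eq_left h]
      field_simp [(by linarith : 2 - t ≠ 0)]
      ring
    · rw [posPart_eq_self.2 h, min_eq_right h]
      ring
  intro x (hx : A⁺ x = 0)
  rw [Submodule.mem_orthogonal]
  intro y hy
  have hy' : A⁺ y = 2 • y := sub_eq_zero.1 (by simpa using hfix hy)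
  simpa [hy', hx, two_smul, inner_add_left] using
    (CFC.posPart_nonneg A).isSelfAdjoint.isSymmetric y x

theorem ker_negPart_two_sub_inf_orthogonal_le_ker_posPart (hA : IsSelfAdjoint A)
    (hgap : ∀ t ∈ spectrum ℝ A, t ≤ 0 ∨ 2 ≤ t) :
    LinearMap.ker (↑(2 - A)⁻ : H →ₗ[ℂ] H) ⊓
        (LinearMap.ker (↑(2 - A) : H →ₗ[ℂ] H))ᗮ ≤
      LinearMap.ker (↑A⁺ : H →ₗ[ℂ] H) := by
  rintro x ⟨hx, hxo⟩
  have hker : LinearMap.ker (↑(2 - A)⁻ : H →ₗ[ℂ] H) ≤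
      LinearMap.ker (↑((2 - A) * (A⁺ * A⁺)) : H →ₗ[ℂ] H) := by
    have hcfc : (2 - A) * (A⁺ * A⁺) = cfc (fun t : ℝ => (2 - t) * (t⁺ * t⁺)) A := by
      rw [cfc_mul (fun t : ℝ => 2 - t) (fun t => t⁺ * t⁺) A,
        cfc_mul (·⁺ : ℝ → ℝ) (·⁺) A, ← posPart_eq_cfc, ← two_sub_eq_cfc hA]
    rw [hcfc, negPart_two_sub_eq_cfc hA]
    refine ker_cfc_le_ker_cfc (h := fun t => -(t * t⁺)) fun t ht => ?_
    rcases hgap t ht with h | h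
    · simp [posPart_eq_zero.2 h]
    · rw [posPart_eq_self.2 (by linarith), negPart_eq_neg.2 (by linarith)]
      ring
  exact (CFC.posPart_nonneg A).isSelfAdjoint.apply_eq_zero_of_apply_apply_mem hxo (hker hx)

theorem ker_posPart_eq_ker_negPart_two_sub_inf (hA : IsSelfAdjoint A)
    (hgap : ∀ t ∈ spectrum ℝ A, t ≤ 0 ∨ 2 ≤ t) :
    LinearMap.ker (↑A⁺ : H →ₗ[ℂ] H) =
      LinearMap.ker (↑(2 - A)⁻ : H →ₗ[ℂ] H) ⊓
        (LinearMap.ker (↑(2 - A) : H →ₗ[ℂ] H))ᗮ :=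
  le_antisymm (le_inf (ker_posPart_le_ker_negPart_two_sub hA)
    (ker_posPart_le_orthogonal_ker_two_sub hA))
    (ker_negPart_two_sub_inf_orthogonal_le_ker_posPart hA hgap)

end SpectralGap

/-- `P_{(2I−P−P*)⁻} + P_{N(2I−P−P*)} = P_{(P+P*)⁺}` for a bounded idempotent `P`. -/
theorem rangeProj_negPart_two_sub (P : H →L[ℂ] H) (hP : P * P = P) :
    rangeProj (negPartOp (2 - P - adjoint P)) + kerProj (2 - P - adjoint P) =
      rangeProj (posPartOp (P + adjoint P)) := by
  have hA : IsSelfAdjoint (P + adjoint P) := IsSelfAdjoint.add_star_self P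
  have hB : IsSelfAdjoint (2 - (P + adjoint P)) := (IsSelfAdjoint.ofNat 2).sub hA
  have hgap : ∀ t ∈ spectrum ℝ (P + adjoint P), t ≤ 0 ∨ 2 ≤ t :=
    fun t => le_zero_or_two_le_of_mem_spectrum_add_star hP
  rw [sub_sub, negPartOp_eq_negPart hB, posPartOp_eq_posPart hA,
    rangeProj_eq_starProjection_orthogonal_ker (CFC.negPart_nonneg _).isSelfAdjoint,
    rangeProj_eq_starProjection_orthogonal_ker (CFC.posPart_nonneg _).isSelfAdjoint,
    kerProj_eq_starProjection, Submodule.starProjection_orthogonal',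
    Submodule.starProjection_orthogonal',
    Submodule.starProjection_eq_sub_of_eq_inf_orthogonal (ker_le_ker_negPart hB)
      (ker_posPart_eq_ker_negPart_two_sub_inf hA hgap)]
  abel
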